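/- Let G be a simple graph, δX a vertex, and X₁,…,Xₙ targets, and suppose C separates δX from every Xᵢ in G. Let G' be G with a super-sink S adjacent exactly to X₁,…,Xₙ. Then in G' with the vertices of C deleted, the vertex δX is not in the same connected component as S, nor as any Xᵢ. -/

import Mathlib

open SimpleGraph

/-- Delete a set of vertices: keep the vertex type, remove all edges incident to `C`. -/
def GraphDel {V : Type} (G : SimpleGraph V) (C : Set V) : SimpleGraph V where
  Adj u v := G.Adj u v ∧ u ∉ C ∧ v ∉ C
  symm := ⟨fun u v ⟨h, hu, hv⟩ => ⟨h.symm, hv, hu⟩⟩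
  loopless := ⟨fun u ⟨h, _, _⟩ => G.irrefl h⟩

/-- Add a super-sink `none` adjacent exactly to the vertices in `T`. -/
def AddSink {V : Type} (G : SimpleGraph V) (T : Set V) : SimpleGraph (Option V) where
  Adj u v :=
    match u, v with
    | some a, some b => G.Adj a b
    | some a, none => a ∈ T
    | none, some b => b ∈ T
    | none, none => False
  symm := by
    refine ⟨?_⟩
    rintro (_|a) (_|b) h
    · exact h
    · exact h
    · exact h
    · exact h.symm
  loopless := by
    refine ⟨?_⟩
    rintro (_|a) h
    · exact h
    · exact G.irrefl h


lemma walk_proj {V : Type} (G : SimpleGraph V) {n : ℕ} (X : Fin n → V) (δX : V)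
    (C : Set V) (hsep : ∀ i, ¬ (GraphDel G C).Reachable δX (X i)) :
    ∀ (a : V), (GraphDel G C).Reachable δX a →
      ∀ (w : Option V), (GraphDel (AddSink G (Set.range X)) (some '' C)).Walk (some a) w →
        ∃ b, w = some b ∧ (GraphDel G C).Reachable δX b := by
  suffices H : ∀ (u w : Option V), (GraphDel (AddSink G (Set.range X)) (some '' C)).Walk u w →
      ∀ a, u = some a → (GraphDel G C).Reachable δX a →
        ∃ b, w = some b ∧ (GraphDel G C).Reachable δX b by
    intro a ha w p
    exact H _ _ p a rfl ha
  intro u w p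
  induction p with
  | nil => exact fun a h ha => ⟨a, h, ha⟩
  | @cons u v w hadj p ih =>
    rintro a rfl ha
    match v, hadj with
    | some b, ⟨hgb, hu, hv⟩ =>
      have hb : (GraphDel G C).Reachable δX b := by
        refine ha.trans (SimpleGraph.Adj.reachable ?_)
        exact ⟨hgb, fun h => hu ⟨a, h, rfl⟩, fun h => hv ⟨b, h, rfl⟩⟩
      exact ih b rfl hb
    | none, ⟨hmem, _, _⟩ =>
      obtain ⟨i, hi⟩ := hmem
      exact absurd (hi ▸ ha) (hsep i)

theorem stmt11 {V : Type} (G : SimpleGraph V) {n : ℕ} (X : Fin n → V) (δX : V)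
    (C : Set V) (hδ : δX ∉ C) (hX : ∀ i, X i ∉ C)
    (hsep : ∀ i, ¬ (GraphDel G C).Reachable δX (X i)) :
    (GraphDel (AddSink G (Set.range X)) (some '' C)).connectedComponentMk (some δX)
        ≠ (GraphDel (AddSink G (Set.range X)) (some '' C)).connectedComponentMk none ∧
      ∀ i, (GraphDel (AddSink G (Set.range X)) (some '' C)).connectedComponentMk (some δX)
        ≠ (GraphDel (AddSink G (Set.range X)) (some '' C)).connectedComponentMk (some (X i)) := by
  constructor
  · intro h
    obtain ⟨p⟩ := (SimpleGraph.ConnectedComponent.eq.mp h)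
    obtain ⟨b, hb, _⟩ := walk_proj G X δX C hsep δX (SimpleGraph.Reachable.refl _) none p
    exact nomatch hb
  · intro i h
    obtain ⟨p⟩ := (SimpleGraph.ConnectedComponent.eq.mp h)
    obtain ⟨b, hb, hr⟩ := walk_proj G X δX C hsep δX (SimpleGraph.Reachable.refl _) (some (X i)) p
    exact hsep i (Option.some.inj hb ▸ hr)
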